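/- Let D be a local (quasi-local) commutative integral domain. Then any two MNI ideals of D (ideals maximal among the nonzero non-invertible ideals) are equal; i.e., D has at most one MNI ideal. -/

import Mathlib

/-!
If two distinct MNI ideals `P` and `Q` existed, their sum `S = P + Q` would strictly contain `P`,
hence be invertible. An invertible ideal divides every ideal it contains, and the cofactor of an
MNI ideal `P ≤ S` is a nonzero non-invertible ideal containing `P`, so it is `P` itself: `S P = P`.
Likewise `S Q = Q`, whence `S² = S`, and cancelling the invertible `S` gives `S = D`. Thus distinct
MNI ideals are comaximal, which is impossible in a local ring.
-/

open scoped nonZeroDivisors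

/-- An ideal of a domain is invertible if it is a unit as a fractional ideal. -/
def IsInvertibleIdeal (D : Type*) [CommRing D] [IsDomain D] (I : Ideal D) : Prop :=
  IsUnit (I : FractionalIdeal D⁰ (FractionRing D))

/-- An MNI ideal: maximal among the nonzero non-invertible ideals. -/
def IsMNI (D : Type*) [CommRing D] [IsDomain D] (P : Ideal D) : Prop :=
  P ≠ ⊥ ∧ ¬ IsInvertibleIdeal D P ∧
    ∀ J : Ideal D, J ≠ ⊥ → ¬ IsInvertibleIdeal D J → P ≤ J → J = P

section

open FractionalIdeal

variable {D : Type*} [CommRing D] [IsDomain D]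

namespace IsInvertibleIdeal

theorem top : IsInvertibleIdeal D ⊤ := by
  rw [IsInvertibleIdeal, coeIdeal_top]
  exact isUnit_one

theorem mul {I J : Ideal D} (hI : IsInvertibleIdeal D I) (hJ : IsInvertibleIdeal D J) :
    IsInvertibleIdeal D (I * J) := by
  rw [IsInvertibleIdeal, coeIdeal_mul]
  exact IsUnit.mul hI hJ

theorem exists_mul_eq_of_le {I P : Ideal D} (hI : IsInvertibleIdeal D I) (hPI : P ≤ I) :
    ∃ J : Ideal D, I * J = P := by
  obtain ⟨u, hu⟩ := hI
  have hle : (↑u⁻¹ * P : FractionalIdeal D⁰ (FractionRing D)) ≤ 1 := by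
    calc (↑u⁻¹ * P : FractionalIdeal D⁰ (FractionRing D))
        ≤ ↑u⁻¹ * I := mul_le_mul_right (coeIdeal_le_coeIdeal _ |>.mpr hPI) _
      _ = 1 := by rw [← hu, Units.inv_mul]
  obtain ⟨J, hJ⟩ := le_one_iff_exists_coeIdeal.mp hle
  refine ⟨J, coeIdeal_injective (K := FractionRing D) ?_⟩
  simp only [coeIdeal_mul, hJ, ← hu, Units.mul_inv_cancel_left]

theorem eq_top_of_mul_self {I : Ideal D} (hI : IsInvertibleIdeal D I) (hII : I * I = I) :
    I = ⊤ := by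
  have h : (I : FractionalIdeal D⁰ (FractionRing D)) * I = I * 1 := by
    rw [← coeIdeal_mul, hII, mul_one]
  rw [← Ideal.one_eq_top, ← coeIdeal_eq_one (K := FractionRing D)]
  exact hI.mul_left_cancel h

end IsInvertibleIdeal

namespace IsMNI

variable {P Q : Ideal D}

theorem ne_top (hP : IsMNI D P) : P ≠ ⊤ :=
  fun h => hP.2.1 (h ▸ IsInvertibleIdeal.top)

theorem mul_eq_of_le {I : Ideal D} (hP : IsMNI D P) (hI : IsInvertibleIdeal D I) (hPI : P ≤ I) :
    I * P = P := by
  obtain ⟨J, hJ⟩ := hI.exists_mul_eq_of_le hPI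
  have hPJ : P ≤ J := hJ ▸ Ideal.mul_le_right
  have hJP : J = P :=
    hP.2.2 J (ne_bot_of_le_ne_bot hP.1 hPJ) (fun hJinv => hP.2.1 (hJ ▸ hI.mul hJinv)) hPJ
  rwa [hJP] at hJ

theorem sup_eq_top (hP : IsMNI D P) (hQ : IsMNI D Q) (hPQ : P ≠ Q) : P ⊔ Q = ⊤ := by
  set S := P ⊔ Q
  have hS : IsInvertibleIdeal D S := by
    by_contra hS
    have hSne : S ≠ ⊥ := ne_bot_of_le_ne_bot hP.1 le_sup_left
    exact hPQ ((hP.2.2 S hSne hS le_sup_left).symm.trans (hQ.2.2 S hSne hS le_sup_right))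
  refine hS.eq_top_of_mul_self ?_
  calc S * S = S * P ⊔ S * Q := Ideal.mul_sup _ _ _
    _ = S := by rw [hP.mul_eq_of_le hS le_sup_left, hQ.mul_eq_of_le hS le_sup_right]

end IsMNI

end

theorem mni_unique_of_local (D : Type*) [CommRing D] [IsDomain D] [IsLocalRing D]
    (P Q : Ideal D) (hP : IsMNI D P) (hQ : IsMNI D Q) : P = Q := by
  by_contra hPQ
  have hle : P ⊔ Q ≤ IsLocalRing.maximalIdeal D :=
    sup_le (IsLocalRing.le_maximalIdeal hP.ne_top) (IsLocalRing.le_maximalIdeal hQ.ne_top)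
  rw [hP.sup_eq_top hQ hPQ, top_le_iff] at hle
  exact IsLocalRing.maximalIdeal.isMaximal D |>.ne_top hle
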